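/- arXiv:2109.11768 — 3 statements merged into one kernel-verified Lean document; each statement's English description precedes it below -/
import Mathlib

section
/- For every natural number n ∈ {2, 3} and every real α with 0 < α ≤ 1/3, one has -4·√((n-1)·α·cot(α)) + (2n-1) < -1/2. -/
open Real

lemma key_cot_bound (α : ℝ) (hα : 0 < α) (hα' : α ≤ 1/3) :
    121/128 < α * Real.cot α := by
  have hs : 0 < Real.sin α :=
    Real.sin_pos_of_pos_of_lt_pi hα (by linarith [Real.pi_gt_three])
  rw [Real.cot_eq_cos_div_sin, mul_div_assoc', lt_div_iff₀ hs]
  have hcos : 1 - α ^ 2 / 2 ≤ Real.cos α := Real.one_sub_sq_div_two_le_cos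
  have habs : |α| ≤ 1 := by rw [abs_of_pos hα]; linarith
  have hsin := abs_le.mp (Real.sin_bound habs)
  rw [abs_of_pos hα] at hsin
  nlinarith [sq_nonneg α, pow_pos hα 3, pow_pos hα 4, sq_nonneg (α - 1/3)]

theorem stmt_2 (n : ℕ) (hn : n = 2 ∨ n = 3) (α : ℝ) (hα : 0 < α) (hα' : α ≤ 1/3) :
    -4 * Real.sqrt (((n : ℝ) - 1) * α * Real.cot α) + (2 * (n : ℝ) - 1) < -(1/2) := by
  have hkey := key_cot_bound α hα hα'
  rcases hn with rfl | rfl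
  · have h : (7/8 : ℝ) < Real.sqrt (((2 : ℝ) - 1) * α * Real.cot α) := by
      rw [show ((2:ℝ) - 1) * α * Real.cot α = α * Real.cot α by ring]
      rw [show (7/8 : ℝ) = Real.sqrt ((7/8)^2) by rw [Real.sqrt_sq (by norm_num)]]
      apply Real.sqrt_lt_sqrt (by positivity)
      nlinarith
    push_cast
    nlinarith
  · have h : (11/8 : ℝ) < Real.sqrt (((3 : ℝ) - 1) * α * Real.cot α) := by
      rw [show ((3:ℝ) - 1) * α * Real.cot α = 2 * (α * Real.cot α) by ring]
      rw [show (11/8 : ℝ) = Real.sqrt ((11/8)^2) by rw [Real.sqrt_sq (by norm_num)]]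
      apply Real.sqrt_lt_sqrt (by positivity)
      nlinarith
    push_cast
    nlinarith
end

section
/- For every natural number n ≥ 2 and every real α with 0 < α < π/2, (cos α)^(1/(n-1)) ≤ cos(α/(n-1)). -/
open Real

lemma cos_mul_le_pow (y : ℝ) (hy : 0 ≤ y) :
    ∀ k : ℕ, (k : ℝ) * y ≤ π / 2 → Real.cos ((k : ℝ) * y) ≤ Real.cos y ^ k := by
  intro k
  induction k with
  | zero => simp
  | succ k ih =>
    intro hk
    have hky : (k : ℝ) * y ≤ (k + 1 : ℝ) * y := by nlinarith
    have hk' : (k : ℝ) * y ≤ π / 2 := le_trans hky (by push_cast at hk ⊢; linarith)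
    have hyle : y ≤ π / 2 := by
      have : (1 : ℝ) * y ≤ (k + 1 : ℝ) * y := by nlinarith
      push_cast at hk; linarith
    have hky0 : 0 ≤ (k : ℝ) * y := by positivity
    have hsin1 : 0 ≤ Real.sin ((k : ℝ) * y) :=
      Real.sin_nonneg_of_nonneg_of_le_pi hky0 (le_trans hk' (by linarith [Real.pi_pos]))
    have hsin2 : 0 ≤ Real.sin y :=
      Real.sin_nonneg_of_nonneg_of_le_pi hy (le_trans hyle (by linarith [Real.pi_pos]))
    have hcosy : 0 ≤ Real.cos y := Real.cos_nonneg_of_mem_Icc ⟨by linarith, hyle⟩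
    have heq : ((k : ℝ) + 1) * y = (k : ℝ) * y + y := by ring
    have hcosk : Real.cos ((k : ℝ) * y) ≤ Real.cos y ^ k := ih hk'
    calc Real.cos (((k : ℕ) + 1 : ℕ) * y)
        = Real.cos ((k : ℝ) * y) * Real.cos y - Real.sin ((k : ℝ) * y) * Real.sin y := by
          push_cast; rw [heq, Real.cos_add]
      _ ≤ Real.cos ((k : ℝ) * y) * Real.cos y := by nlinarith
      _ ≤ Real.cos y ^ k * Real.cos y := by nlinarith
      _ = Real.cos y ^ (k + 1) := by ring

theorem stmt_3 (n : ℕ) (hn : 2 ≤ n) (α : ℝ) (hα : 0 < α) (hα' : α < π/2) :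
    (Real.cos α) ^ ((1 : ℝ) / ((n : ℝ) - 1)) ≤ Real.cos (α / ((n : ℝ) - 1)) := by
  set m : ℕ := n - 1 with hm
  have hmcast : ((m : ℝ)) = (n : ℝ) - 1 := by
    have : (1 : ℕ) ≤ n := by omega
    push_cast [hm, Nat.cast_sub this]
    ring
  have hm1 : 1 ≤ m := by omega
  have hmpos : (0 : ℝ) < (m : ℝ) := by exact_mod_cast Nat.pos_of_ne_zero (by omega)
  set y : ℝ := α / ((n : ℝ) - 1) with hy
  have hne : ((n : ℝ) - 1) ≠ 0 := by rw [← hmcast]; exact ne_of_gt hmpos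
  have hmy : (m : ℝ) * y = α := by
    rw [hy, hmcast, mul_div_cancel₀ _ hne]
  have hy0 : 0 ≤ y := by
    rw [hy, ← hmcast]; positivity
  have hkey : Real.cos α ≤ Real.cos y ^ m := by
    rw [← hmy]
    exact cos_mul_le_pow y hy0 m (by rw [hmy]; linarith)
  have hcosα : 0 ≤ Real.cos α := Real.cos_nonneg_of_mem_Icc ⟨by linarith, le_of_lt hα'⟩
  have hcosy : 0 ≤ Real.cos y := by
    have hyle : y ≤ π / 2 := by
      nlinarith [hmy, hα', (by exact_mod_cast hm1 : (1:ℝ) ≤ (m:ℝ)), hy0]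
    exact Real.cos_nonneg_of_mem_Icc ⟨by linarith, hyle⟩
  have hstep : (Real.cos α) ^ ((1 : ℝ) / ((n : ℝ) - 1)) ≤ (Real.cos y ^ m) ^ ((1 : ℝ) / ((n : ℝ) - 1)) :=
    Real.rpow_le_rpow hcosα hkey (by rw [← hmcast]; positivity)
  refine hstep.trans_eq ?_
  rw [← hmcast, ← Real.rpow_natCast (Real.cos y) m, ← Real.rpow_mul hcosy]
  rw [mul_one_div, div_self (ne_of_gt hmpos), Real.rpow_one]
end

section
/- For every natural number n ≥ 2, the function f(a) = (cos^(2n-2)(a/n) - cos²(a)) / sin²(a) on (0, π/2] is decreasing, and its value at a = π/2 satisfies f(π/2) = cos^(2n-2)(π/(2n)) > 1/4. -/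
/-!
Put `θ = a / n`. Since `1 - cos^(2n-2) θ = sin² θ · ∑_{k < n-1} cos^(2k) θ` and `sin a = sin (n θ)`,
`f a = 1 - ∑_{k ≤ n-2} (sin θ cos^k θ / sin (n θ))²`, so it suffices that each
`sin θ cos^k θ / sin (n θ)` increases on `(0, π/(2n)]`. It is the reciprocal of
`S_n θ · cos^(n-2-k) θ` with `S_n θ = sin (n θ) / (sin θ cos^(n-2) θ)`, and `S_n` decreases:
`sin ((n+1) θ) = sin (n θ) cos θ + cos (n θ) sin θ` gives `S_(n+1) = S_n + C_n`, where
`C_n θ = cos (n θ) / cos^(n-1) θ` decreases because `cos ((n+1) θ) = cos (n θ) cos θ - sin (n θ) sin θ`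
gives `C_(n+1) = C_n - sin (n θ) sin θ / cos^n θ`, a product of nonnegative increasing factors.
The bound at `π/2` follows from `cos x ≥ 1 - x²/2` and Bernoulli's inequality.
-/

open Real Set Finset

lemma antitoneOn_cos_mul_div_cos_pow (k : ℕ) :
    AntitoneOn (fun x => cos ((k + 1) * x) / cos x ^ k) (Icc 0 (π / (2 * (k + 1)))) := by
  induction k with
  | zero => simpa using antitoneOn_cos.mono (Icc_subset_Icc_right (by linarith [pi_pos]))
  | succ k ih =>
    have hdom : ∀ x ∈ Icc 0 (π / (2 * ((k + 1 : ℕ) + 1))),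
        0 ≤ x ∧ x < π / 2 ∧ ((k : ℝ) + 1) * x ≤ π / 2 ∧ x ∈ Icc 0 (π / (2 * (k + 1))) := by
      rintro x ⟨hx0, hx⟩
      rw [le_div_iff₀ (by positivity)] at hx
      push_cast at hx
      have hk : (0 : ℝ) ≤ k := k.cast_nonneg
      refine ⟨hx0, by nlinarith [pi_pos], by nlinarith, hx0, ?_⟩
      rw [le_div_iff₀ (by positivity)]
      nlinarith
    have hsplit : ∀ x, cos x ≠ 0 → cos (((k + 1 : ℕ) + 1) * x) / cos x ^ (k + 1) =
        cos ((k + 1) * x) / cos x ^ k - sin ((k + 1) * x) * sin x / cos x ^ (k + 1) := by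
      intro x hx
      rw [show (((k + 1 : ℕ) : ℝ) + 1) * x = (k + 1) * x + x by push_cast; ring, cos_add]
      field_simp
      ring
    intro θ hθ φ hφ hθφ
    obtain ⟨hθ0, hθ, hkθ, hθ'⟩ := hdom θ hθ
    obtain ⟨hφ0, hφ, hkφ, hφ'⟩ := hdom φ hφ
    have hcφ : 0 < cos φ := cos_pos_of_mem_Ioo ⟨by linarith, hφ⟩
    have hcθ : 0 < cos θ := cos_pos_of_mem_Ioo ⟨by linarith, hθ⟩
    have hT : sin ((k + 1) * θ) * sin θ / cos θ ^ (k + 1) ≤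
        sin ((k + 1) * φ) * sin φ / cos φ ^ (k + 1) := by
      have hsθ : 0 ≤ sin θ := sin_nonneg_of_nonneg_of_le_pi hθ0 (by linarith)
      have hkθ0 : 0 ≤ (k + 1) * θ := by positivity
      have hskθ : 0 ≤ sin ((k + 1) * θ) := sin_nonneg_of_nonneg_of_le_pi hkθ0 (by linarith)
      have hsin : sin θ ≤ sin φ := sin_le_sin_of_le_of_le_pi_div_two (by linarith) hφ.le hθφ
      have hsink : sin ((k + 1) * θ) ≤ sin ((k + 1) * φ) :=
        sin_le_sin_of_le_of_le_pi_div_two (by linarith [pi_pos]) hkφ (by gcongr)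
      have hcos : cos φ ≤ cos θ := cos_le_cos_of_nonneg_of_le_pi hθ0 (by linarith) hθφ
      exact div_le_div₀ (mul_nonneg (hskθ.trans hsink) (hsθ.trans hsin))
        (mul_le_mul hsink hsin hsθ (hskθ.trans hsink)) (by positivity)
        (pow_le_pow_left₀ hcφ.le hcos _)
    simp only
    rw [hsplit θ hcθ.ne', hsplit φ hcφ.ne']
    linarith [ih hθ' hφ' hθφ]

lemma sin_pos_and_cos_pos_and_sin_mul_pos {m : ℕ} {x : ℝ} (hx : x ∈ Ioc 0 (π / (2 * (m + 2)))) :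
    0 < sin x ∧ 0 < cos x ∧ 0 < sin ((m + 2) * x) := by
  obtain ⟨hx0, hx⟩ := hx
  rw [le_div_iff₀ (by positivity)] at hx
  have : (0 : ℝ) ≤ m := m.cast_nonneg
  exact ⟨sin_pos_of_pos_of_lt_pi hx0 (by nlinarith [pi_pos]),
    cos_pos_of_mem_Ioo ⟨by linarith [pi_pos], by nlinarith [pi_pos]⟩,
    sin_pos_of_pos_of_lt_pi (by positivity) (by nlinarith [pi_pos])⟩

lemma antitoneOn_sin_mul_div_sin_mul_cos_pow (k : ℕ) :
    AntitoneOn (fun x => sin ((k + 2) * x) / (sin x * cos x ^ k)) (Ioc 0 (π / (2 * (k + 2)))) := by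
  induction k with
  | zero =>
    intro θ hθ φ hφ hθφ
    have hsθ := (sin_pos_and_cos_pos_and_sin_mul_pos hθ).1.ne'
    have hsφ := (sin_pos_and_cos_pos_and_sin_mul_pos hφ).1.ne'
    simp only [CharP.cast_eq_zero, zero_add, pow_zero, mul_one]
    rw [sin_two_mul, sin_two_mul, mul_right_comm, mul_div_cancel_right₀ _ hsφ,
      mul_right_comm, mul_div_cancel_right₀ _ hsθ]
    gcongr
    exact cos_le_cos_of_nonneg_of_le_pi hθ.1.le (by linarith [hφ.2, pi_pos]) hθφ
  | succ k ih =>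
    have hc := antitoneOn_cos_mul_div_cos_pow (k + 1)
    push_cast at hc ⊢
    refine ((ih.mono ?_).add (hc.mono ?_)).congr fun x hx => ?_
    · exact Ioc_subset_Ioc_right (by gcongr; linarith)
    · exact Ioc_subset_Icc_self.trans (Icc_subset_Icc_right (by gcongr; linarith))
    · obtain ⟨hsx, hcx, -⟩ :=
        sin_pos_and_cos_pos_and_sin_mul_pos (m := k + 1) (by push_cast; exact hx)
      simp only
      rw [show ((k : ℝ) + 1 + 2) * x = (k + 2) * x + x by ring, sin_add,
        show ((k : ℝ) + 1 + 1) * x = (k + 2) * x by ring]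
      field_simp
      ring

lemma one_sub_cos_pow_eq_sum_sq (x : ℝ) (m : ℕ) :
    1 - cos x ^ (2 * m) = ∑ k ∈ range m, (sin x * cos x ^ k) ^ 2 := by
  calc 1 - cos x ^ (2 * m) = (1 - cos x ^ 2) * ∑ k ∈ range m, (cos x ^ 2) ^ k := by
        rw [mul_neg_geom_sum, pow_mul]
    _ = ∑ k ∈ range m, (sin x * cos x ^ k) ^ 2 := by
        rw [← sin_sq, mul_sum]
        exact sum_congr rfl fun k _ => by ring

lemma monotoneOn_sin_mul_cos_pow_div_sin {k m : ℕ} (hk : k ≤ m) :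
    MonotoneOn (fun x => sin x * cos x ^ k / sin ((m + 2) * x)) (Ioc 0 (π / (2 * (m + 2)))) := by
  obtain ⟨j, hj⟩ := Nat.exists_eq_add_of_le hk
  have hinv : ∀ x ∈ Ioc 0 (π / (2 * (m + 2))), sin x * cos x ^ k / sin ((m + 2) * x) =
      (sin ((m + 2) * x) / (sin x * cos x ^ m) * cos x ^ j)⁻¹ := by
    intro x hx
    obtain ⟨hs, hc, hsn⟩ := sin_pos_and_cos_pos_and_sin_mul_pos hx
    rw [hj, pow_add]
    field_simp
  intro θ hθ φ hφ hθφ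
  obtain ⟨hsθ, hcθ, hsnθ⟩ := sin_pos_and_cos_pos_and_sin_mul_pos hθ
  obtain ⟨hsφ, hcφ, hsnφ⟩ := sin_pos_and_cos_pos_and_sin_mul_pos hφ
  have hφπ : φ ≤ π := hφ.2.trans (div_le_self pi_pos.le (by linarith [m.cast_nonneg (α := ℝ)]))
  have hSθ := div_pos hsnθ (mul_pos hsθ (pow_pos hcθ m))
  have hSφ := div_pos hsnφ (mul_pos hsφ (pow_pos hcφ m))
  simp only
  rw [hinv θ hθ, hinv φ hφ]
  refine inv_anti₀ (by positivity) (mul_le_mul ?_ ?_ (by positivity) hSθ.le)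
  · exact antitoneOn_sin_mul_div_sin_mul_cos_pow m hθ hφ hθφ
  · exact pow_le_pow_left₀ hcφ.le (cos_le_cos_of_nonneg_of_le_pi hθ.1.le hφπ hθφ) _

lemma antitoneOn_cos_div_pow_sub_cos_sq_div_sin_sq (m : ℕ) :
    AntitoneOn (fun a => (cos (a / (m + 2)) ^ (2 * (m + 1)) - cos a ^ 2) / sin a ^ 2)
      (Ioc 0 (π / 2)) := by
  have hdom : ∀ a ∈ Ioc 0 (π / 2), a / (m + 2) ∈ Ioc 0 (π / (2 * (m + 2))) := by
    rintro a ⟨ha0, ha⟩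
    refine ⟨by positivity, ?_⟩
    rw [← div_div]
    gcongr
  have hsum : ∀ a ∈ Ioc 0 (π / 2),
      (cos (a / (m + 2)) ^ (2 * (m + 1)) - cos a ^ 2) / sin a ^ 2 = 1 - ∑ k ∈ range (m + 1),
        (sin (a / (m + 2)) * cos (a / (m + 2)) ^ k / sin ((m + 2) * (a / (m + 2)))) ^ 2 := by
    intro a ha
    have hs : sin ((m + 2) * (a / (m + 2))) ≠ 0 :=
      (sin_pos_and_cos_pos_and_sin_mul_pos (hdom a ha)).2.2.ne'
    rw [mul_div_cancel₀ a (by positivity)] at hs ⊢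
    simp only [div_pow, ← sum_div, ← one_sub_cos_pow_eq_sum_sq, cos_sq']
    field_simp
    ring
  intro a ha b hb hab
  simp only
  rw [hsum a ha, hsum b hb]
  refine sub_le_sub_left (sum_le_sum fun k hk => pow_le_pow_left₀ ?_ ?_ 2) 1
  · obtain ⟨hs, hc, hsn⟩ := sin_pos_and_cos_pos_and_sin_mul_pos (hdom a ha)
    positivity
  · exact monotoneOn_sin_mul_cos_pow_div_sin (Nat.lt_succ_iff.mp (mem_range.mp hk))
      (hdom a ha) (hdom b hb) (by gcongr)

lemma one_div_four_lt_cos_pi_div_pow (n : ℕ) : 1 / 4 < cos (π / (2 * n)) ^ (2 * n - 2) := by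
  rcases n with _ | _ | k
  · norm_num
  · norm_num
  have hk : (0 : ℝ) ≤ k := k.cast_nonneg
  have hexp : 2 * (k + 1 + 1) - 2 = 2 * (k + 1) := by omega
  rw [hexp]
  push_cast
  set x := π / (2 * (k + 1 + 1)) with hx
  have hx0 : 0 ≤ x := by positivity
  have hxπ : x ≤ π / 4 := by rw [hx]; gcongr; linarith
  have hπ := pi_lt_d2
  -- `4 (k + 1) ≤ (k + 2) ^ 2` turns `(k + 1) x ^ 2` into at most `π ^ 2 / 16`
  have hkx : (k + 1) * x ^ 2 ≤ π ^ 2 / 16 := by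
    rw [hx, div_pow, mul_div_assoc', div_le_div_iff₀ (by positivity) (by norm_num)]
    nlinarith [sq_nonneg (k : ℝ), pi_pos]
  calc (1 : ℝ) / 4 < 1 + ((2 * (k + 1) : ℕ) : ℝ) * -(x ^ 2 / 2) := by
        push_cast; nlinarith [pi_pos]
    _ ≤ (1 + -(x ^ 2 / 2)) ^ (2 * (k + 1)) := one_add_mul_le_pow (by nlinarith [pi_pos]) _
    _ ≤ cos x ^ (2 * (k + 1)) := by
        rw [← sub_eq_add_neg]
        exact pow_le_pow_left₀ (by nlinarith [pi_pos]) one_sub_sq_div_two_le_cos _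

theorem stmt_4 (n : ℕ) (hn : 2 ≤ n) :
    AntitoneOn (fun a : ℝ => (Real.cos (a / n) ^ (2 * n - 2) - Real.cos a ^ 2) / Real.sin a ^ 2)
      (Set.Ioc 0 (π/2)) ∧
    (Real.cos ((π/2) / n) ^ (2 * n - 2) - Real.cos (π/2) ^ 2) / Real.sin (π/2) ^ 2
      = Real.cos (π / (2 * n)) ^ (2 * n - 2) ∧
    (1 : ℝ) / 4 < Real.cos (π / (2 * n)) ^ (2 * n - 2) := by
  refine ⟨?_, by simp [div_div], one_div_four_lt_cos_pi_div_pow n⟩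
  obtain ⟨m, rfl⟩ := Nat.exists_eq_add_of_le' hn
  rw [show 2 * (m + 2) - 2 = 2 * (m + 1) by omega]
  push_cast
  exact antitoneOn_cos_div_pow_sub_cos_sq_div_sin_sq m
end
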